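/- arXiv:1102.1359 — 2 statements merged into one kernel-verified Lean document; each statement's English description precedes it below -/
import Mathlib

section
/- Every smooth group endomorphism of the multiplicative group ℂ* = ℂ \ {0} is of the form g ↦ |g|^{b+√(-1)c} · (g/|g|)^v for some (b + √(-1)c, v) ∈ ℂ × ℤ, and this correspondence gives a group isomorphism between the group of smooth endomorphisms of ℂ* (under pointwise multiplication) and ℂ × ℤ. -/
noncomputable section

/-- the function `ℂ → ℂ` underlying an endomorphism of `ℂ* = ℂ \ {0}` (extended by `0`) -/
def endoToFun (f : ℂˣ →* ℂˣ) : ℂ → ℂ :=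
  fun z => if h : z = 0 then 0 else (f (Units.mk0 z h) : ℂ)

/-- A group endomorphism of `ℂ* = ℂ \ {0}` is *smooth* if the underlying map is smooth
on `ℂ \ {0}` as a map of real manifolds. -/
def IsSmoothEndo (f : ℂˣ →* ℂˣ) : Prop :=
  ContDiffOn ℝ (⊤ : ℕ∞) (endoToFun f) {z : ℂ | z ≠ 0}

/-- the endomorphism `g ↦ |g|^{b+√-1 c} (g/|g|)^v` of `ℂ*` attached to
`(w, v) = (b + √-1 c, v) ∈ ℂ × ℤ` -/
def endoFormula (w : ℂ) (v : ℤ) (g : ℂ) : ℂ :=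
  Complex.exp (w * Real.log ‖g‖) * (g / (‖g‖ : ℂ)) ^ v

open Complex

/-! ### Auxiliary lemmas -/

lemma endoFormula_ne_zero (w : ℂ) (v : ℤ) {g : ℂ} (hg : g ≠ 0) : endoFormula w v g ≠ 0 := by
  have h1 : (‖g‖ : ℂ) ≠ 0 := by
    simpa using (norm_ne_zero_iff.mpr hg)
  exact mul_ne_zero (Complex.exp_ne_zero _) (zpow_ne_zero _ (div_ne_zero hg h1))

lemma endoFormula_one (w : ℂ) (v : ℤ) : endoFormula w v 1 = 1 := by
  simp [endoFormula]

lemma endoFormula_mul (w : ℂ) (v : ℤ) {g₁ g₂ : ℂ} (h₁ : g₁ ≠ 0) (h₂ : g₂ ≠ 0) :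
    endoFormula w v (g₁ * g₂) = endoFormula w v g₁ * endoFormula w v g₂ := by
  have ha₁ : ‖g₁‖ ≠ 0 := norm_ne_zero_iff.mpr h₁
  have ha₂ : ‖g₂‖ ≠ 0 := norm_ne_zero_iff.mpr h₂
  unfold endoFormula
  rw [norm_mul, Real.log_mul ha₁ ha₂]
  push_cast
  rw [mul_add, Complex.exp_add]
  rw [show (g₁ * g₂) / ((‖g₁‖ : ℂ) * (‖g₂‖ : ℂ))
      = (g₁ / (‖g₁‖ : ℂ)) * (g₂ / (‖g₂‖ : ℂ)) by ring]
  rw [mul_zpow]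
  ring

lemma endoFormula_add (w w' : ℂ) (v v' : ℤ) {g : ℂ} (hg : g ≠ 0) :
    endoFormula (w + w') (v + v') g = endoFormula w v g * endoFormula w' v' g := by
  have h1 : (g / (‖g‖ : ℂ)) ≠ 0 :=
    div_ne_zero hg (by simpa using norm_ne_zero_iff.mpr hg)
  unfold endoFormula
  rw [add_mul, Complex.exp_add, zpow_add₀ h1]
  ring

lemma contDiffAt_zpow_real {x : ℂ} (hx : x ≠ 0) (v : ℤ) :
    ContDiffAt ℝ (⊤ : ℕ∞) (fun y : ℂ => y ^ v) x := by
  have h : ContDiffAt ℂ ⊤ (fun y : ℂ => y ^ v) x := by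
    cases v with
    | ofNat n => simpa using (contDiff_id.pow n).contDiffAt
    | negSucc n =>
      have h : ContDiffAt ℂ ⊤ (fun y : ℂ => (y ^ (n + 1))⁻¹) x :=
        ((contDiff_id.pow (n + 1)).contDiffAt).inv (pow_ne_zero _ hx)
      simpa [zpow_negSucc] using h
  exact (h.restrict_scalars ℝ).of_le le_top

lemma contDiffAt_abs_cx {x : ℂ} (hx : x ≠ 0) :
    ContDiffAt ℝ (⊤ : ℕ∞) (fun z : ℂ => ‖z‖) x := by
  have hns : ContDiff ℝ (⊤ : ℕ∞) (fun z : ℂ => Complex.normSq z) := by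
    simp only [Complex.normSq_apply]
    exact (Complex.reCLM.contDiff.mul Complex.reCLM.contDiff).add
      (Complex.imCLM.contDiff.mul Complex.imCLM.contDiff)
  have hne : Complex.normSq x ≠ 0 := by simpa [Complex.normSq_eq_zero] using hx
  have h : ContDiffAt ℝ (⊤ : ℕ∞) (fun z : ℂ => Real.sqrt (Complex.normSq z)) x :=
    (Real.contDiffAt_sqrt hne).comp x hns.contDiffAt
  simpa [Complex.norm_def] using h

lemma contDiffOn_endoFormula (w : ℂ) (v : ℤ) :
    ContDiffOn ℝ (⊤ : ℕ∞) (endoFormula w v) {z : ℂ | z ≠ 0} := by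
  intro x hx
  have hx' : x ≠ 0 := hx
  have habs := contDiffAt_abs_cx hx'
  have habs_ne : ‖x‖ ≠ 0 := norm_ne_zero_iff.mpr hx'
  have hlog : ContDiffAt ℝ (⊤ : ℕ∞) (fun z : ℂ => Real.log ‖z‖) x :=
    (Real.contDiffAt_log.mpr habs_ne).comp x habs
  have hlogC : ContDiffAt ℝ (⊤ : ℕ∞) (fun z : ℂ => ((Real.log ‖z‖ : ℝ) : ℂ)) x :=
    Complex.ofRealCLM.contDiff.contDiffAt.comp x hlog
  have hexp : ContDiffAt ℝ (⊤ : ℕ∞) (fun z : ℂ => Complex.exp (w * Real.log ‖z‖)) x :=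
    Complex.contDiff_exp.contDiffAt.comp x (contDiffAt_const.mul hlogC)
  have habsC : ContDiffAt ℝ (⊤ : ℕ∞) (fun z : ℂ => ((‖z‖ : ℝ) : ℂ)) x :=
    Complex.ofRealCLM.contDiff.contDiffAt.comp x habs
  have habsC_ne : ((‖x‖ : ℝ) : ℂ) ≠ 0 := by simpa using habs_ne
  have hdiv : ContDiffAt ℝ (⊤ : ℕ∞) (fun z : ℂ => z / ((‖z‖ : ℝ) : ℂ)) x := by
    simp only [div_eq_mul_inv]
    exact ContDiffAt.mul (contDiffAt_id (𝕜 := ℝ) (E := ℂ)) (habsC.inv habsC_ne)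
  have hdne : x / ((‖x‖ : ℝ) : ℂ) ≠ 0 :=
    div_ne_zero hx' habsC_ne
  have hzp : ContDiffAt ℝ (⊤ : ℕ∞) (fun z : ℂ => (z / ((‖z‖ : ℝ) : ℂ)) ^ v) x :=
    ContDiffAt.comp (g := fun y : ℂ => y ^ v) x (contDiffAt_zpow_real hdne v) hdiv
  exact (hexp.mul hzp).contDiffWithinAt

/-- the monoid hom attached to `(w, v)` -/
def homOf (w : ℂ) (v : ℤ) : ℂˣ →* ℂˣ where
  toFun u := Units.mk0 (endoFormula w v u) (endoFormula_ne_zero w v u.ne_zero)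
  map_one' := by ext; simpa using endoFormula_one w v
  map_mul' a b := by ext; simpa using endoFormula_mul w v a.ne_zero b.ne_zero

lemma endoToFun_homOf (w : ℂ) (v : ℤ) {z : ℂ} (hz : z ≠ 0) :
    endoToFun (homOf w v) z = endoFormula w v z := by
  simp [endoToFun, hz, homOf]

lemma isSmoothEndo_homOf (w : ℂ) (v : ℤ) : IsSmoothEndo (homOf w v) :=
  (contDiffOn_endoFormula w v).congr fun _ hz => endoToFun_homOf w v hz

/-- smooth one-parameter subgroups of `ℂ*` are exponential -/
lemma one_param {γ : ℝ → ℂ} (hd : Differentiable ℝ γ) (h0 : γ 0 = 1)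
    (hmul : ∀ s t, γ (s + t) = γ s * γ t) (t : ℝ) :
    γ t = Complex.exp (deriv γ 0 * t) := by
  set a := deriv γ 0 with ha
  have key : ∀ u : ℝ, HasDerivAt γ (a * γ u) u := by
    intro u
    have h1 : HasDerivAt γ a 0 := (hd 0).hasDerivAt
    have hsub : HasDerivAt (fun s : ℝ => s - u) 1 u := by
      simpa using (hasDerivAt_id u).sub_const u
    have h2 : HasDerivAt (fun s : ℝ => γ (s - u)) a u := by
      have h1' : HasDerivAt γ a (u - u) := by simpa using h1
      have h := HasDerivAt.scomp (𝕜 := ℝ) (x := u) (h := fun s : ℝ => s - u) h1' hsub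
      rw [one_smul] at h
      exact h
    have h3 : HasDerivAt (fun s : ℝ => γ u * γ (s - u)) (γ u * a) u := h2.const_mul (γ u)
    have h4 : (fun s : ℝ => γ u * γ (s - u)) = γ := by
      funext s
      rw [← hmul, add_sub_cancel]
    rw [h4] at h3
    simpa [mul_comm] using h3
  have hexp : ∀ u : ℝ, HasDerivAt (fun s : ℝ => Complex.exp (-(a * s)))
      (Complex.exp (-(a * u)) * (-a)) u := by
    intro u
    have hc : HasDerivAt (fun s : ℝ => ((s : ℂ))) 1 u := by
      exact Complex.ofRealCLM.hasDerivAt (x := u)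
    have h5 : HasDerivAt (fun s : ℝ => -(a * (s : ℂ))) (-a) u := by
      have h := (hc.const_mul a).neg
      rw [mul_one] at h
      exact h
    simpa using h5.cexp
  have hg : ∀ u : ℝ, HasDerivAt (fun s : ℝ => γ s * Complex.exp (-(a * s))) 0 u := by
    intro u
    have := (key u).mul (hexp u)
    have h6 : a * γ u * Complex.exp (-(a * u)) + γ u * (Complex.exp (-(a * u)) * -a) = 0 := by
      ring
    rwa [h6] at this
  have hconst : ∀ u : ℝ, γ u * Complex.exp (-(a * u)) = γ 0 * Complex.exp (-(a * 0)) := by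
    intro u
    exact is_const_of_deriv_eq_zero (fun s => (hg s).differentiableAt)
      (fun s => (hg s).deriv) u 0
  have h7 := hconst t
  rw [h0] at h7
  simp only [mul_zero, neg_zero, Complex.exp_zero, one_mul] at h7
  have h8 : Complex.exp (-(a * t)) ≠ 0 := Complex.exp_ne_zero _
  field_simp [Complex.exp_neg] at h7 ⊢
  simpa using (mul_inv_eq_one₀ (Complex.exp_ne_zero (a * t))).mp (by simpa [Complex.exp_neg] using h7)


lemma endoToFun_exp (f : ℂˣ →* ℂˣ) (z : ℂ) :
    endoToFun f (Complex.exp z) = (f (Units.mk0 (Complex.exp z) (Complex.exp_ne_zero z)) : ℂ) := by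
  rw [endoToFun, dif_neg (Complex.exp_ne_zero z)]

lemma hasDerivAt_exp_mul (w : ℂ) : HasDerivAt (fun t : ℝ => Complex.exp (w * t)) w 0 := by
  have hc : HasDerivAt (fun s : ℝ => ((s : ℝ) : ℂ)) 1 0 := by
    exact Complex.ofRealCLM.hasDerivAt (x := (0 : ℝ))
  simpa using (hc.const_mul w).cexp

lemma exists_homOf (f : ℂˣ →* ℂˣ) (hf : IsSmoothEndo f) : ∃ w v, homOf w v = f := by
  set F : ℂ → ℂ := fun z => endoToFun f (Complex.exp z) with hF
  have hFu : ∀ z, F z = (f (Units.mk0 (Complex.exp z) (Complex.exp_ne_zero z)) : ℂ) :=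
    fun z => endoToFun_exp f z
  have hF1 : F 0 = 1 := by
    rw [hFu]
    have h : Units.mk0 (Complex.exp 0) (Complex.exp_ne_zero 0) = 1 := by ext; simp
    rw [h, map_one, Units.val_one]
  have hFmul : ∀ z z', F (z + z') = F z * F z' := by
    intro z z'
    rw [hFu, hFu, hFu, ← Units.val_mul, ← map_mul]
    congr 2
    ext
    simp [Complex.exp_add]
  have hFsmooth : ContDiff ℝ (⊤ : ℕ∞) F := by
    rw [← contDiffOn_univ]
    exact hf.comp ((Complex.contDiff_exp (𝕜 := ℝ)).contDiffOn)
      (fun z _ => Complex.exp_ne_zero z)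
  have hFdiff : Differentiable ℝ F := hFsmooth.differentiable (by simp)
  set L := fderiv ℝ F 0 with hL
  have hFL : ∀ z, F z = Complex.exp (L z) := by
    intro z
    set γ : ℝ → ℂ := fun t => F (t • z) with hγ
    have hρ : ∀ t : ℝ, HasDerivAt (fun s : ℝ => s • z) z t := by
      intro t
      simpa using (hasDerivAt_id t).smul_const z
    have hd : Differentiable ℝ γ := fun t =>
      DifferentiableAt.comp t (hFdiff _) ((hρ t).differentiableAt)
    have h0 : γ 0 = 1 := by simp [hγ, hF1]
    have hm : ∀ s t, γ (s + t) = γ s * γ t := by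
      intro s t; simp only [hγ, add_smul]; exact hFmul _ _
    have hDγ : HasDerivAt γ (L z) 0 := by
      have hfd : HasFDerivAt F L ((fun s : ℝ => s • z) 0) := by
        simpa using (hFdiff 0).hasFDerivAt
      exact hfd.comp_hasDerivAt 0 (hρ 0)
    have h1 := one_param hd h0 hm 1
    rw [hDγ.deriv] at h1
    simpa [hγ] using h1
  have hF2π : Complex.exp (L (2 * Real.pi * Complex.I)) = 1 := by
    rw [← hFL, hFu]
    have h : Units.mk0 (Complex.exp (2 * Real.pi * Complex.I))
        (Complex.exp_ne_zero _) = 1 := by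
      ext; simp [Complex.exp_two_pi_mul_I]
    rw [h, map_one, Units.val_one]
  obtain ⟨n, hn⟩ := Complex.exp_eq_one_iff.mp hF2π
  have hLI : L Complex.I = n * Complex.I := by
    have h1 : L ((2 * Real.pi : ℝ) • Complex.I) = (2 * Real.pi : ℝ) • L Complex.I :=
      L.map_smul _ _
    rw [Complex.real_smul, Complex.real_smul] at h1
    push_cast at h1
    rw [h1] at hn
    have h2π : (2 * (Real.pi : ℂ)) ≠ 0 := by
      simp [Real.pi_ne_zero]
    apply mul_left_cancel₀ h2π
    rw [hn]
    push_cast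
    ring
  refine ⟨L 1, n, ?_⟩
  ext u
  have hu : (u : ℂ) ≠ 0 := u.ne_zero
  have habs_ne : ‖(u : ℂ)‖ ≠ 0 := norm_ne_zero_iff.mpr hu
  have habsC_ne : ((‖(u : ℂ)‖ : ℝ) : ℂ) ≠ 0 := by simpa using habs_ne
  have hz : Complex.exp (Complex.log u) = u := Complex.exp_log hu
  have h1 : (f u : ℂ) = F (Complex.log u) := by
    have h : Units.mk0 (Complex.exp (Complex.log u)) (Complex.exp_ne_zero _) = u := by
      ext; exact hz
    rw [hFu, h]
  have hval : ((homOf (L 1) n u : ℂˣ) : ℂ) = endoFormula (L 1) n u := rfl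
  rw [hval, h1, hFL]
  set z := Complex.log (u : ℂ) with hzdef
  have hzdec : z = (z.re : ℝ) • (1 : ℂ) + (z.im : ℝ) • Complex.I := by
    simp only [Complex.real_smul, mul_one, Complex.ofReal_one]
    rw [Complex.re_add_im]
  have hLz : L z = (z.re : ℂ) * L 1 + (z.im : ℂ) * (n * Complex.I) := by
    rw [hzdec, map_add, L.map_smul, L.map_smul, hLI]
    simp [Complex.real_smul]
  rw [hLz, Complex.exp_add]
  have hre : z.re = Real.log ‖(u : ℂ)‖ := Complex.log_re u
  have him : z.im = Complex.arg u := Complex.log_im u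
  have harg : Complex.exp (Complex.arg (u : ℂ) * Complex.I) = (u : ℂ) / ‖(u : ℂ)‖ := by
    rw [eq_div_iff habsC_ne, mul_comm]
    exact Complex.norm_mul_exp_arg_mul_I u
  have hzp : Complex.exp ((z.im : ℂ) * (n * Complex.I)) = ((u : ℂ) / ‖(u : ℂ)‖) ^ n := by
    rw [← harg, ← Complex.exp_int_mul]
    congr 1
    rw [him]
    ring
  rw [hzp]
  unfold endoFormula
  rw [hre]
  ring_nf

lemma homOf_injective {w w' : ℂ} {v v' : ℤ} (h : homOf w v = homOf w' v') :
    w = w' ∧ v = v' := by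
  have happ : ∀ z : ℂ, ∀ hz : z ≠ 0, endoFormula w v z = endoFormula w' v' z := by
    intro z hz
    have h1 := DFunLike.congr_fun h (Units.mk0 z hz)
    have h2 := congrArg Units.val h1
    simpa [homOf] using h2
  constructor
  · have key : ∀ t : ℝ, Complex.exp (w * t) = Complex.exp (w' * t) := by
      intro t
      have h1 := happ (Complex.exp ((t : ℝ) : ℂ)) (Complex.exp_ne_zero _)
      have habs : ‖Complex.exp ((t : ℝ) : ℂ)‖ = Real.exp t := by
        rw [Complex.norm_exp]; norm_num
      have hratio : (Complex.exp ((t : ℝ) : ℂ)) / ((Real.exp t : ℝ) : ℂ) = 1 := by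
        rw [Complex.ofReal_exp]
        exact div_self (Complex.exp_ne_zero _)
      simp only [endoFormula, habs, hratio, one_zpow, mul_one, Real.log_exp] at h1
      exact h1
    have hfun : (fun t : ℝ => Complex.exp (w * t)) = fun t : ℝ => Complex.exp (w' * t) :=
      funext key
    have h1 := hasDerivAt_exp_mul w
    have h2 := hasDerivAt_exp_mul w'
    rw [← hfun] at h2
    exact h1.unique h2
  · have key : ∀ t : ℝ, Complex.exp ((v : ℂ) * Complex.I * t)
        = Complex.exp ((v' : ℂ) * Complex.I * t) := by
      intro t
      have h1 := happ (Complex.exp ((t : ℝ) * Complex.I)) (Complex.exp_ne_zero _)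
      have habs : ‖Complex.exp ((t : ℝ) * Complex.I)‖ = 1 := by
        rw [Complex.norm_exp]; simp
      simp only [endoFormula, habs, Real.log_one, Complex.ofReal_zero, mul_zero,
        Complex.exp_zero, one_mul, Complex.ofReal_one, div_one] at h1
      rw [← Complex.exp_int_mul, ← Complex.exp_int_mul] at h1
      calc Complex.exp ((v : ℂ) * Complex.I * t)
          = Complex.exp ((v : ℂ) * ((t : ℝ) * Complex.I)) := by ring_nf
        _ = Complex.exp ((v' : ℂ) * ((t : ℝ) * Complex.I)) := h1
        _ = Complex.exp ((v' : ℂ) * Complex.I * t) := by ring_nf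
    have hfun : (fun t : ℝ => Complex.exp ((v : ℂ) * Complex.I * t))
        = fun t : ℝ => Complex.exp ((v' : ℂ) * Complex.I * t) := funext key
    have h1 := hasDerivAt_exp_mul ((v : ℂ) * Complex.I)
    have h2 := hasDerivAt_exp_mul ((v' : ℂ) * Complex.I)
    rw [← hfun] at h2
    have h3 := h1.unique h2
    have h4 : (v : ℂ) = v' := mul_right_cancel₀ Complex.I_ne_zero h3
    exact_mod_cast h4

lemma homOf_add (w w' : ℂ) (v v' : ℤ) :
    homOf (w + w') (v + v') = homOf w v * homOf w' v' := by
  ext u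
  have := endoFormula_add w w' v v' u.ne_zero
  simpa [homOf] using this

/-- **Smooth endomorphisms of `ℂ*`.**  Every smooth group endomorphism of
`ℂ* = ℂ \ {0} ≅ ℝ_{>0} × S¹` is of the form `g ↦ |g|^{b+√-1 c}·(g/|g|)^v` for a unique
`(b + √-1 c, v) ∈ ℂ × ℤ`, and this correspondence is a group isomorphism from the group
`Hom(ℂ*, ℂ*)` of smooth endomorphisms (under pointwise multiplication) onto `ℂ × ℤ`. -/
theorem smooth_endomorphisms_of_complex_units :
    ∃ e : {f : ℂˣ →* ℂˣ // IsSmoothEndo f} ≃ ℂ × ℤ,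
      (∀ f : {f : ℂˣ →* ℂˣ // IsSmoothEndo f}, ∀ u : ℂˣ,
        ((f.1 u : ℂ)) = endoFormula (e f).1 (e f).2 (u : ℂ)) ∧
      (∀ (f₁ f₂ : {f : ℂˣ →* ℂˣ // IsSmoothEndo f}) (h : IsSmoothEndo (f₁.1 * f₂.1)),
        e ⟨f₁.1 * f₂.1, h⟩ = e f₁ + e f₂) := by
  set Φ : ℂ × ℤ → {f : ℂˣ →* ℂˣ // IsSmoothEndo f} :=
    fun p => ⟨homOf p.1 p.2, isSmoothEndo_homOf p.1 p.2⟩ with hΦ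
  have hinj : Function.Injective Φ := by
    intro p q hpq
    have h' : homOf p.1 p.2 = homOf q.1 q.2 := congrArg Subtype.val hpq
    obtain ⟨h1, h2⟩ := homOf_injective h'
    exact Prod.ext h1 h2
  have hsurj : Function.Surjective Φ := by
    rintro ⟨f, hf⟩
    obtain ⟨w, v, hw⟩ := exists_homOf f hf
    exact ⟨(w, v), Subtype.ext hw⟩
  have hbij : Function.Bijective Φ := ⟨hinj, hsurj⟩
  set E := Equiv.ofBijective Φ hbij with hE
  refine ⟨E.symm, ?_, ?_⟩
  · intro f u
    have h1 : Φ (E.symm f) = f := E.apply_symm_apply f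
    conv_lhs => rw [← h1]
    rfl
  · intro f₁ f₂ h
    rw [Equiv.symm_apply_eq]
    apply Subtype.ext
    have h1 : f₁.1 = homOf (E.symm f₁).1 (E.symm f₁).2 :=
      (congrArg Subtype.val (E.apply_symm_apply f₁)).symm
    have h2 : f₂.1 = homOf (E.symm f₂).1 (E.symm f₂).2 :=
      (congrArg Subtype.val (E.apply_symm_apply f₂)).symm
    show f₁.1 * f₂.1 = homOf (E.symm f₁ + E.symm f₂).1 (E.symm f₁ + E.symm f₂).2
    rw [Prod.fst_add, Prod.snd_add, homOf_add, h1, h2]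

end
end

section
/- Let M and M' be connected closed smooth manifolds of dimension n whose mod 2 cohomology rings H*(M; ℤ/2) and H*(M'; ℤ/2) are isomorphic as graded rings. Suppose that H*(M; ℤ/2) is generated as a ring by H^r(M; ℤ/2) for some r. Then any graded ring isomorphism φ : H*(M'; ℤ/2) → H*(M; ℤ/2) sends the total Stiefel-Whitney class of M' to the total Stiefel-Whitney class of M. -/
/-!
Since the cohomology of `M` is generated in degree `r`, it vanishes in the degrees strictly between
`r` and `2r`, so on `H^r` the squares are forced: `Sq^0 = id`, `Sq^r` is squaring and all others
vanish. A graded isomorphism is onto in each degree, so the same holds for `M'`, and by the Cartan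
formula `φ` commutes with every `Sq^i`. Evaluation on the fundamental class in top degree only
records whether a class vanishes, hence is preserved by `φ`; Poincaré duality then shows that `φ`
preserves the Wu classes, and therefore `w = Sq(v)`.
-/

noncomputable section

/-- The mod 2 cohomology of a connected closed smooth `n`-manifold, packaged with the
structure relevant to Wu's theorem: a graded commutative `ℤ/2`-algebra `A = H^*(M;ℤ/2)`,
the Steenrod squares `Sq^i` with their standard properties (Cartan formula, `Sq^0 = id`,
`Sq^i x = x²` in degree `i`, vanishing above the degree), evaluation against the mod 2
fundamental class `μ`, Poincaré duality, and the Wu classes `v_k` characterized by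
`⟨v_k ∪ x, μ⟩ = ⟨Sq^k x, μ⟩`.  By Wu's theorem the total Stiefel–Whitney class of `M` is
`w(M) = Sq(v) = ∑_{i,k} Sq^i(v_k)`. -/
structure ClosedManifoldMod2Cohomology (n : ℕ) where
  A : Type
  [commRing : CommRing A]
  [algebra : Algebra (ZMod 2) A]
  grading : ℕ → Submodule (ZMod 2) A
  internal : DirectSum.IsInternal grading
  one_mem : (1 : A) ∈ grading 0
  mul_mem : ∀ {i j : ℕ} {x y : A}, x ∈ grading i → y ∈ grading j → x * y ∈ grading (i + j)
  /-- `M` is connected: `H⁰ = ℤ/2·1` -/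
  connected : grading 0 = Submodule.span (ZMod 2) {1}
  /-- `M` is `n`-dimensional: cohomology vanishes above degree `n` -/
  vanish : ∀ j : ℕ, n < j → grading j = ⊥
  /-- the Steenrod squares -/
  Sq : ℕ → A →ₗ[ZMod 2] A
  sq_zero : ∀ x : A, Sq 0 x = x
  sq_square : ∀ (i : ℕ) (x : A), x ∈ grading i → Sq i x = x * x
  sq_vanish : ∀ (i j : ℕ) (x : A), x ∈ grading j → j < i → Sq i x = 0
  sq_mem : ∀ (i j : ℕ) (x : A), x ∈ grading j → Sq i x ∈ grading (i + j)
  sq_cartan : ∀ (i : ℕ) (x y : A),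
    Sq i (x * y) = ∑ j ∈ Finset.range (i + 1), Sq j x * Sq (i - j) y
  /-- evaluation against the mod 2 fundamental class of the closed manifold `M` -/
  mu : A →ₗ[ZMod 2] ZMod 2
  mu_supp : ∀ (j : ℕ) (x : A), j ≠ n → x ∈ grading j → mu x = 0
  /-- Poincaré duality: the cup product pairing into degree `n` is non-degenerate -/
  poincare : ∀ (j : ℕ) (x : A), x ∈ grading j →
    (∀ y ∈ grading (n - j), mu (x * y) = 0) → x = 0
  /-- the Wu classes -/
  wu : ℕ → A
  wu_mem : ∀ k, wu k ∈ grading k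
  wu_spec : ∀ (k : ℕ) (x : A), x ∈ grading (n - k) → mu (wu k * x) = mu (Sq k x)

attribute [instance] ClosedManifoldMod2Cohomology.commRing
  ClosedManifoldMod2Cohomology.algebra

/-- the total Stiefel–Whitney class `w(M) = Sq(v) = ∑_{i,k} Sq^i(v_k)` (Wu's theorem) -/
def ClosedManifoldMod2Cohomology.totalSW {n : ℕ}
    (M : ClosedManifoldMod2Cohomology n) : M.A :=
  ∑ k ∈ Finset.range (n + 1), ∑ i ∈ Finset.range (n + 1), M.Sq i (M.wu k)


def RingEquiv.toZModAlgEquiv {k : ℕ} {A B : Type*} [Semiring A] [Semiring B]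
    [Algebra (ZMod k) A] [Algebra (ZMod k) B] (φ : A ≃+* B) : A ≃ₐ[ZMod k] B :=
  AlgEquiv.ofRingEquiv (f := φ) fun c =>
    RingHom.congr_fun (RingHom.ext_zmod ((φ : A →+* B).comp (algebraMap _ _)) (algebraMap _ _)) c

namespace ClosedManifoldMod2Cohomology

variable {n : ℕ}

section

variable (M : ClosedManifoldMod2Cohomology n)

theorem exists_mem_grading_mul_of_mem_closure {r : ℕ} {x : M.A}
    (hx : x ∈ Submonoid.closure (M.grading r : Set M.A)) : ∃ m, x ∈ M.grading (r * m) := by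
  induction hx using Submonoid.closure_induction with
  | mem x hx => exact ⟨1, by rwa [mul_one]⟩
  | one => exact ⟨0, by simpa using M.one_mem⟩
  | mul x y _ _ hx hy =>
    obtain ⟨a, ha⟩ := hx
    obtain ⟨b, hb⟩ := hy
    exact ⟨a + b, by rw [mul_add]; exact M.mul_mem ha hb⟩

theorem grading_eq_bot_of_not_dvd {r j : ℕ}
    (hgen : Algebra.adjoin (ZMod 2) (M.grading r : Set M.A) = ⊤) (hj : ¬r ∣ j) :
    M.grading j = ⊥ := by
  by_contra hne
  refine hj (M.internal.submodule_iSupIndep.mem_of_biSup_eq_top (s := {i | r ∣ i}) ?_ hne)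
  rw [eq_top_iff, ← Algebra.top_toSubmodule, ← hgen, Algebra.adjoin_eq_span, Submodule.span_le]
  intro x hx
  obtain ⟨m, hm⟩ := M.exists_mem_grading_mul_of_mem_closure hx
  exact Submodule.mem_iSup_of_mem (r * m) (Submodule.mem_iSup_of_mem (dvd_mul_right r m) hm)

theorem sq_eq_of_mem_generating_degree {r : ℕ}
    (hgen : Algebra.adjoin (ZMod 2) (M.grading r : Set M.A) = ⊤) {y : M.A}
    (hy : y ∈ M.grading r) (i : ℕ) :
    M.Sq i y = if i = 0 then y else if i = r then y * y else 0 := by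
  split_ifs with h0 hr
  · rw [h0, M.sq_zero]
  · rw [hr, M.sq_square r y hy]
  · rcases Nat.lt_or_gt_of_ne hr with hlt | hgt
    · have hdeg : M.grading (i + r) = ⊥ := by
        refine M.grading_eq_bot_of_not_dvd hgen ?_
        rw [Nat.dvd_add_self_right]
        exact Nat.not_dvd_of_pos_of_lt (Nat.pos_of_ne_zero h0) hlt
      simpa [hdeg] using M.sq_mem i r y hy
    · exact M.sq_vanish i r y hy hgt

theorem sq_one (i : ℕ) : M.Sq i 1 = if i = 0 then 1 else 0 := by
  split_ifs with h0
  · rw [h0, M.sq_zero]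
  · exact M.sq_vanish i 0 1 M.one_mem (Nat.pos_of_ne_zero h0)

theorem mu_eq_zero_iff {x : M.A} (hx : x ∈ M.grading n) : M.mu x = 0 ↔ x = 0 := by
  refine ⟨fun hmu => M.poincare n x hx fun y hy => ?_, fun h => h ▸ map_zero M.mu⟩
  rw [Nat.sub_self, M.connected, Submodule.mem_span_singleton] at hy
  obtain ⟨c, rfl⟩ := hy
  rw [mul_smul_comm, mul_one, map_smul, hmu, smul_zero]

theorem eq_wu_of_mu_mul_eq {k : ℕ} {v : M.A} (hv : v ∈ M.grading k)
    (hmu : ∀ x ∈ M.grading (n - k), M.mu (v * x) = M.mu (M.Sq k x)) : v = M.wu k := by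
  refine sub_eq_zero.mp (M.poincare k _ (sub_mem hv (M.wu_mem k)) fun x hx => ?_)
  rw [sub_mul, map_sub, hmu x hx, M.wu_spec k x hx, sub_self]

end

section

variable {M M' : ClosedManifoldMod2Cohomology n}

theorem map_sq_of_adjoin_eq_top {F : Type*} [FunLike F M'.A M.A]
    [AlgHomClass F (ZMod 2) M'.A M.A] (φ : F) {s : Set M'.A}
    (hs : Algebra.adjoin (ZMod 2) s = ⊤)
    (hφs : ∀ y ∈ s, ∀ i, φ (M'.Sq i y) = M.Sq i (φ y)) (i : ℕ) (x : M'.A) :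
    φ (M'.Sq i x) = M.Sq i (φ x) := by
  have hx : x ∈ Algebra.adjoin (ZMod 2) s := hs ▸ Algebra.mem_top
  induction hx using Algebra.adjoin_induction generalizing i with
  | mem y hy => exact hφs y hy i
  | algebraMap c =>
    simp only [Algebra.algebraMap_eq_smul_one, map_smul, map_one, sq_one]
    split_ifs <;> simp
  | add a b _ _ ha hb => simp only [map_add, ha, hb]
  | mul a b _ _ ha hb =>
    rw [M'.sq_cartan, map_mul φ, M.sq_cartan, map_sum]
    exact Finset.sum_congr rfl fun j _ => by rw [map_mul, ha, hb]

def IsGradedMap (φ : M'.A → M.A) : Prop :=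
  ∀ (j : ℕ) (x : M'.A), x ∈ M'.grading j → φ x ∈ M.grading j

variable (φ : M'.A ≃ₐ[ZMod 2] M.A)

theorem map_grading (hφ : IsGradedMap φ) (j : ℕ) :
    (M'.grading j).map φ.toLinearMap = M.grading j := by
  refine congrFun ((M.internal.submodule_iSupIndep.le_iff_eq_of_iSup_eq_top
    (f := fun i => (M'.grading i).map φ.toLinearMap) ?_).mp
    fun i => Submodule.map_le_iff_le_comap.mpr fun x hx => hφ i x hx) j
  rw [← Submodule.map_iSup, M'.internal.submodule_iSup_eq_top, Submodule.map_top,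
    LinearMap.range_eq_top.mpr φ.surjective]

theorem symm_mem_grading (hφ : IsGradedMap φ) {j : ℕ} {x : M.A} (hx : x ∈ M.grading j) :
    φ.symm x ∈ M'.grading j := by
  rw [← map_grading φ hφ j] at hx
  obtain ⟨y, hy, rfl⟩ := hx
  simpa using hy

theorem adjoin_grading_eq_top_of_isGradedMap (hφ : IsGradedMap φ) {r : ℕ}
    (hgen : Algebra.adjoin (ZMod 2) (M.grading r : Set M.A) = ⊤) :
    Algebra.adjoin (ZMod 2) (M'.grading r : Set M'.A) = ⊤ := by
  apply Subalgebra.map_injective (f := (φ : M'.A →ₐ[ZMod 2] M.A)) φ.injective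
  rw [← Algebra.adjoin_image, Algebra.map_top, (AlgHom.range_eq_top _).mpr φ.surjective,
    ← hgen, ← map_grading φ hφ r, Submodule.map_coe]
  rfl

theorem map_sq_of_generated_in_degree (hφ : IsGradedMap φ) {r : ℕ}
    (hgen : Algebra.adjoin (ZMod 2) (M.grading r : Set M.A) = ⊤) (i : ℕ) (x : M'.A) :
    φ (M'.Sq i x) = M.Sq i (φ x) := by
  have hgen' := adjoin_grading_eq_top_of_isGradedMap φ hφ hgen
  refine map_sq_of_adjoin_eq_top φ hgen' (fun y hy k => ?_) i x
  rw [M'.sq_eq_of_mem_generating_degree hgen' hy,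
    M.sq_eq_of_mem_generating_degree hgen (hφ r y hy)]
  split_ifs <;> simp

theorem map_mu (hφ : IsGradedMap φ) {j : ℕ} {x : M'.A} (hx : x ∈ M'.grading j) :
    M.mu (φ x) = M'.mu x := by
  by_cases hj : j = n
  · subst hj
    have hZMod2 : ∀ a b : ZMod 2, (a = 0 ↔ b = 0) → a = b := by decide
    refine hZMod2 _ _ ?_
    rw [M.mu_eq_zero_iff (hφ j x hx), M'.mu_eq_zero_iff hx, map_eq_zero_iff φ φ.injective]
  · rw [M.mu_supp j _ hj (hφ j x hx), M'.mu_supp j x hj hx]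

theorem map_wu (hφ : IsGradedMap φ)
    (hSq : ∀ i x, φ (M'.Sq i x) = M.Sq i (φ x)) (k : ℕ) : φ (M'.wu k) = M.wu k := by
  refine M.eq_wu_of_mu_mul_eq (hφ k _ (M'.wu_mem k)) fun x hx => ?_
  obtain ⟨y, hy, rfl⟩ : ∃ y ∈ M'.grading (n - k), φ y = x :=
    ⟨φ.symm x, symm_mem_grading φ hφ hx, φ.apply_symm_apply x⟩
  rw [← map_mul, map_mu φ hφ (M'.mul_mem (M'.wu_mem k) hy), M'.wu_spec k y hy, ← hSq,
    map_mu φ hφ (M'.sq_mem k _ y hy)]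

theorem map_totalSW (hφ : IsGradedMap φ)
    (hSq : ∀ i x, φ (M'.Sq i x) = M.Sq i (φ x)) : φ M'.totalSW = M.totalSW := by
  simp only [totalSW, map_sum, hSq, map_wu φ hφ hSq]

end

end ClosedManifoldMod2Cohomology

/-- **Choi–Masuda–Suh (ch-ma-su10).**  Let `M`, `M'` be connected closed smooth
`n`-manifolds with isomorphic mod 2 cohomology rings, and suppose `H^*(M;ℤ/2)` is
generated as a ring by `H^r(M;ℤ/2)` for some `r`.  Then any graded ring isomorphism
`H^*(M';ℤ/2) → H^*(M;ℤ/2)` sends the total Stiefel–Whitney class of `M'` to that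
of `M`. -/
theorem graded_iso_preserves_stiefel_whitney (n r : ℕ)
    (M M' : ClosedManifoldMod2Cohomology n)
    (hgen : Algebra.adjoin (ZMod 2) (M.grading r : Set M.A) = ⊤)
    (φ : M'.A ≃+* M.A)
    (hφ : ∀ (j : ℕ) (x : M'.A), x ∈ M'.grading j → φ x ∈ M.grading j) :
    φ M'.totalSW = M.totalSW := by
  let ψ : M'.A ≃ₐ[ZMod 2] M.A := φ.toZModAlgEquiv
  exact ClosedManifoldMod2Cohomology.map_totalSW ψ hφ
    (ClosedManifoldMod2Cohomology.map_sq_of_generated_in_degree ψ hφ hgen)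
end
end
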